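/- arXiv:1302.1169 — 4 statements merged into one kernel-verified Lean document; each statement's English description precedes it below -/
import Mathlib

section
/- Let F(A,z) = Σ_{n≥0} z^n / (A(A+1)···(A+n-1)). If A → ∞ and z = z(A) satisfies 0 < z < A and √A/(A−z) → 0, then F(A,z) ∼ A/(A−z), i.e., F(A,z)·(A−z)/A → 1. -/
open Filter Finset

/-- The confluent hypergeometric function `Φ(1, A, z)`. -/
noncomputable def hypF (A z : ℝ) : ℝ :=
  ∑' n : ℕ, z ^ n / ∏ k ∈ Finset.range n, (A + k)

/-!
Write `r = z / A`. Since `A (A + 1) ⋯ (A + n - 1) ≥ A ^ n`, the series is dominated by the geometric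
series, so `F (1 - r) ≤ 1`. Conversely, for `n < N` every factor `A + k` is at most `A (1 + N / A)`,
whence `F (1 - r) ≥ (1 - r ^ N) / (1 + N / A) ^ N`. This lower bound tends to `1` as soon as
`N ² / A → 0` (the denominator is at most `exp (N ² / A)`) and `N (1 - r) → ∞` (then `r ^ N → 0`).
Such an `N` exists precisely because `(1 - r) √A = (A - z) / √A → ∞`.
-/

open Topology

section Bounds

variable {A z : ℝ}

lemma pow_le_prod_range_add (hA : 0 ≤ A) (n : ℕ) : A ^ n ≤ ∏ k ∈ range n, (A + k) := by
  calc A ^ n = ∏ _k ∈ range n, A := by rw [prod_const, card_range]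
    _ ≤ ∏ k ∈ range n, (A + k) :=
      prod_le_prod (fun _ _ => hA) fun k _ => le_add_of_nonneg_right k.cast_nonneg

lemma prod_range_add_le (hA : 0 < A) {n N : ℕ} (hn : n ≤ N) :
    ∏ k ∈ range n, (A + k) ≤ A ^ n * (1 + N / A) ^ N := by
  calc ∏ k ∈ range n, (A + k) ≤ ∏ _k ∈ range n, (A + N) :=
        prod_le_prod (fun _ _ => by positivity) fun k hk => by
          have : k ≤ N := (mem_range.1 hk).le.trans hn
          gcongr
    _ = A ^ n * (1 + N / A) ^ n := by
        rw [prod_const, card_range, ← mul_pow, mul_add, mul_one, mul_div_cancel₀ _ hA.ne']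
    _ ≤ A ^ n * (1 + N / A) ^ N := by gcongr; exact le_add_of_nonneg_right (by positivity)

lemma hypF_term_le (hA : 0 < A) (hz : 0 ≤ z) (n : ℕ) :
    z ^ n / ∏ k ∈ range n, (A + k) ≤ (z / A) ^ n := by
  rw [div_pow]
  exact div_le_div_of_nonneg_left (pow_nonneg hz n) (by positivity)
    (pow_le_prod_range_add hA.le n)

lemma summable_hypF_term (hA : 0 < A) (hz : 0 ≤ z) (hzA : z < A) :
    Summable fun n : ℕ => z ^ n / ∏ k ∈ range n, (A + k) :=
  .of_nonneg_of_le (fun n => by positivity) (hypF_term_le hA hz)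
    (summable_geometric_of_lt_one (by positivity) ((div_lt_one hA).2 hzA))

lemma hypF_mul_one_sub_div_le_one (hA : 0 < A) (hz : 0 ≤ z) (hzA : z < A) :
    hypF A z * (1 - z / A) ≤ 1 := by
  have hr : z / A < 1 := (div_lt_one hA).2 hzA
  have hF : hypF A z ≤ (1 - z / A)⁻¹ := by
    rw [← tsum_geometric_of_lt_one (by positivity) hr]
    exact (summable_hypF_term hA hz hzA).tsum_le_tsum (hypF_term_le hA hz)
      (summable_geometric_of_lt_one (by positivity) hr)
  calc hypF A z * (1 - z / A) ≤ (1 - z / A)⁻¹ * (1 - z / A) := by gcongr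
    _ = 1 := inv_mul_cancel₀ (by linarith)

lemma one_sub_pow_div_le_hypF_mul_one_sub_div (hA : 0 < A) (hz : 0 ≤ z) (hzA : z < A) (N : ℕ) :
    (1 - (z / A) ^ N) / (1 + N / A) ^ N ≤ hypF A z * (1 - z / A) := by
  have hr : 0 ≤ 1 - z / A := by rw [sub_nonneg, div_le_one hA]; exact hzA.le
  have hpartial : (∑ n ∈ range N, (z / A) ^ n) / (1 + N / A) ^ N ≤ hypF A z := by
    rw [sum_div]
    refine (sum_le_sum fun n hn => ?_).trans
      ((summable_hypF_term hA hz hzA).sum_le_tsum _ fun n _ => by positivity)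
    rw [div_pow, div_div]
    exact div_le_div_of_nonneg_left (by positivity) (by positivity)
      (prod_range_add_le hA (mem_range.1 hn).le)
  calc (1 - (z / A) ^ N) / (1 + N / A) ^ N
      = (∑ n ∈ range N, (z / A) ^ n) / (1 + N / A) ^ N * (1 - z / A) := by
        rw [div_mul_eq_mul_div, geom_sum_mul_neg]
    _ ≤ hypF A z * (1 - z / A) := by gcongr

end Bounds

section Asymptotics

variable {α : Type*} {l : Filter α}

lemma tendsto_one_add_div_pow_nhds_one {A : α → ℝ} {N : α → ℕ} (hA : ∀ᶠ x in l, 0 ≤ A x)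
    (hN : Tendsto (fun x => (N x : ℝ) ^ 2 / A x) l (𝓝 0)) :
    Tendsto (fun x => (1 + N x / A x) ^ N x) l (𝓝 1) := by
  have hexp : Tendsto (fun x => Real.exp ((N x : ℝ) ^ 2 / A x)) l (𝓝 1) := by
    simpa [Function.comp_def] using (Real.continuous_exp.tendsto 0).comp hN
  refine tendsto_of_tendsto_of_tendsto_of_le_of_le' tendsto_const_nhds hexp ?_ ?_
  · filter_upwards [hA] with x hx
    exact one_le_pow₀ (le_add_of_nonneg_right (by positivity))
  · filter_upwards [hA] with x hx
    calc (1 + N x / A x) ^ N x ≤ Real.exp (N x / A x) ^ N x := by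
          gcongr
          linarith [Real.add_one_le_exp (N x / A x)]
      _ = Real.exp ((N x : ℝ) ^ 2 / A x) := by rw [← Real.exp_nat_mul, mul_div_assoc', sq]

lemma tendsto_pow_nhds_zero_of_mul_one_sub {r : α → ℝ} {N : α → ℕ} (hr : ∀ᶠ x in l, 0 ≤ r x)
    (hN : Tendsto (fun x => N x * (1 - r x)) l atTop) :
    Tendsto (fun x => r x ^ N x) l (𝓝 0) := by
  have hexp : Tendsto (fun x => Real.exp (-(N x * (1 - r x)))) l (𝓝 0) :=
    Real.tendsto_exp_atBot.comp (tendsto_neg_atTop_atBot.comp hN)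
  refine tendsto_of_tendsto_of_tendsto_of_le_of_le' tendsto_const_nhds hexp ?_ ?_
  · filter_upwards [hr] with x hx
    positivity
  · filter_upwards [hr] with x hx
    calc r x ^ N x ≤ Real.exp (-(1 - r x)) ^ N x := by
          gcongr
          linarith [Real.add_one_le_exp (-(1 - r x))]
      _ = Real.exp (-(N x * (1 - r x))) := by rw [← Real.exp_nat_mul, mul_neg]

/-- The witness is the geometric mean of the two scales `√A` and `1 / δ`, rounded up. -/
lemma exists_nat_sq_div_tendsto_zero_and_mul_tendsto_atTop {A δ : α → ℝ}
    (hA : Tendsto A l atTop) (hδ : ∀ᶠ x in l, 0 < δ x)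
    (hδA : Tendsto (fun x => δ x * √(A x)) l atTop) :
    ∃ N : α → ℕ, Tendsto (fun x => (N x : ℝ) ^ 2 / A x) l (𝓝 0) ∧
      Tendsto (fun x => N x * δ x) l atTop := by
  refine ⟨fun x => ⌈√(√(A x) / δ x)⌉₊, ?_, ?_⟩
  · have hbound : Tendsto (fun x => 2 * (δ x * √(A x))⁻¹ + 2 * (A x)⁻¹) l (𝓝 0) := by
      simpa using (hδA.inv_tendsto_atTop.const_mul 2).add (hA.inv_tendsto_atTop.const_mul 2)
    refine tendsto_of_tendsto_of_tendsto_of_le_of_le' tendsto_const_nhds hbound ?_ ?_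
    · filter_upwards [hA.eventually_ge_atTop 0] with x hx
      positivity
    · filter_upwards [hA.eventually_gt_atTop 0, hδ] with x hx hδx
      set s := √(√(A x) / δ x)
      have hs : s ^ 2 = √(A x) / δ x := Real.sq_sqrt (by positivity)
      have hceil : (⌈s⌉₊ : ℝ) ≤ s + 1 := (Nat.ceil_lt_add_one (by positivity)).le
      have hsqA : √(A x) ^ 2 = A x := Real.sq_sqrt hx.le
      calc (⌈s⌉₊ : ℝ) ^ 2 / A x ≤ (2 * s ^ 2 + 2) / A x := by
            gcongr
            nlinarith [sq_nonneg (s - 1), Nat.cast_nonneg (α := ℝ) ⌈s⌉₊]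
        _ = 2 * (δ x * √(A x))⁻¹ + 2 * (A x)⁻¹ := by
            rw [hs]
            field_simp
            linear_combination hsqA
  · refine tendsto_atTop_mono' l ?_ (Real.tendsto_sqrt_atTop.comp hδA)
    filter_upwards [hA.eventually_ge_atTop 0, hδ] with x hx hδx
    calc √(δ x * √(A x)) = √(√(A x) / δ x) * δ x := by
          have : δ x * √(A x) = √(A x) / δ x * δ x ^ 2 := by field_simp
          rw [this, Real.sqrt_mul (by positivity), Real.sqrt_sq hδx.le]
      _ ≤ ⌈√(√(A x) / δ x)⌉₊ * δ x := by gcongr; exact Nat.le_ceil _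

end Asymptotics

theorem stmt2 (z : ℝ → ℝ)
    (hz : ∀ᶠ A in atTop, 0 < z A ∧ z A < A)
    (hlim : Tendsto (fun A => Real.sqrt A / (A - z A)) atTop (nhds 0)) :
    Tendsto (fun A => hypF A (z A) * (A - z A) / A) atTop (nhds 1) := by
  have hev : ∀ᶠ A in atTop, 0 < A ∧ 0 < z A ∧ z A < A := (eventually_gt_atTop 0).and hz
  have hδ : ∀ᶠ A in atTop, 0 < 1 - z A / A := by
    filter_upwards [hev] with A ⟨hA, _, hzA⟩
    rwa [sub_pos, div_lt_one hA]
  have hδA : Tendsto (fun A => (1 - z A / A) * √A) atTop atTop := by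
    have hpos : ∀ᶠ A in atTop, √A / (A - z A) ∈ Set.Ioi 0 := by
      filter_upwards [hev] with A ⟨hA, _, hzA⟩
      exact div_pos (Real.sqrt_pos.2 hA) (sub_pos.2 hzA)
    refine (tendsto_nhdsWithin_of_tendsto_nhds_of_eventually_within _ hlim hpos
      ).inv_tendsto_nhdsGT_zero.congr' ?_
    filter_upwards [hev] with A ⟨hA, _, hzA⟩
    have hsq : √A ^ 2 = A := Real.sq_sqrt hA.le
    have : A - z A ≠ 0 := (sub_pos.2 hzA).ne'
    simp only [Pi.inv_apply]
    field_simp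
    rw [hsq]
  obtain ⟨N, hN2, hNδ⟩ :=
    exists_nat_sq_div_tendsto_zero_and_mul_tendsto_atTop tendsto_id hδ hδA
  have hlower : Tendsto (fun A => (1 - (z A / A) ^ N A) / (1 + N A / A) ^ N A) atTop (𝓝 1) := by
    have hr : ∀ᶠ A in atTop, 0 ≤ z A / A := hev.mono fun A ⟨hA, hz0, _⟩ => by positivity
    simpa only [sub_zero, div_one, Pi.div_def] using (tendsto_const_nhds.sub (tendsto_pow_nhds_zero_of_mul_one_sub hr hNδ)).div
      (tendsto_one_add_div_pow_nhds_one (eventually_ge_atTop 0) hN2) one_ne_zero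
  have hnormalize : ∀ A ≠ 0, hypF A (z A) * (A - z A) / A = hypF A (z A) * (1 - z A / A) :=
    fun A hA => by rw [mul_div_assoc, sub_div, div_self hA]
  refine tendsto_of_tendsto_of_tendsto_of_le_of_le' hlower tendsto_const_nhds ?_ ?_ <;>
    filter_upwards [hev] with A ⟨hA, hz0, hzA⟩ <;>
    rw [hnormalize A hA.ne']
  · exact one_sub_pow_div_le_hypF_mul_one_sub_div hA hz0.le hzA (N A)
  · exact hypF_mul_one_sub_div_le_one hA hz0.le hzA
end

section
/- Let F(A,z) = Σ_{n≥0} z^n / (A(A+1)···(A+n-1)). If A → ∞ and z = z(A) > A with √A/(z−A) → 0, then F(A,z) ∼ e^z Γ(A) / z^{A-1}, i.e., F(A,z) z^{A-1} / (e^z Γ(A)) → 1. -/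
/-!
Writing `A = s + 1`, the series `e^{-x} x^s F(s + 1, x) / s` is what repeated integration by parts
produces from the lower incomplete gamma function `γ(s, x) = ∫₀ˣ e^{-t} t^{s-1} dt`, so
`F(A, x) x^{A-1} / (e^x Γ(A)) = γ(A - 1, x) / Γ(A - 1)`. The missing mass
`Γ(s) - γ(s, x) = ∫ₓ^∞ e^{-t} t^{s-1} dt` is the probability that a Gamma(s)-distributed variable,
of mean and variance `s`, exceeds `x`; Chebyshev's inequality bounds it by `s / (x - s)²`, which for
`s = A - 1`, `x = z` is at most `(√A / (z - A))²`.
-/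

open Filter Finset

open MeasureTheory Set Real
open scoped Nat

noncomputable def lowerGamma (s x : ℝ) : ℝ :=
  ∫ t in (0 : ℝ)..x, exp (-t) * t ^ (s - 1)

section LowerGamma

variable {s x : ℝ}

lemma continuous_exp_neg_mul_rpow {c : ℝ} (hc : 0 ≤ c) :
    Continuous fun t : ℝ => exp (-t) * t ^ c :=
  (continuous_exp.comp continuous_neg).mul (continuous_rpow_const hc)

lemma lowerGamma_nonneg (hx : 0 ≤ x) : 0 ≤ lowerGamma s x :=
  intervalIntegral.integral_nonneg hx fun t ht => by have := ht.1; positivity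

lemma lowerGamma_le_rpow (hs : 1 ≤ s) (hx : 0 ≤ x) : lowerGamma s x ≤ x ^ s := by
  have hle : lowerGamma s x ≤ ∫ _ in (0 : ℝ)..x, x ^ (s - 1) := by
    refine intervalIntegral.integral_mono_on hx
      ((continuous_exp_neg_mul_rpow (by linarith)).intervalIntegrable 0 x)
      intervalIntegrable_const fun t ht => ?_
    calc exp (-t) * t ^ (s - 1) ≤ 1 * t ^ (s - 1) := by
          gcongr
          · exact rpow_nonneg ht.1 _
          · exact exp_le_one_iff.2 (by linarith [ht.1])
      _ ≤ x ^ (s - 1) := by rw [one_mul]; exact rpow_le_rpow ht.1 ht.2 (by linarith)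
  calc lowerGamma s x ≤ x * x ^ (s - 1) := by simpa using hle
    _ = x ^ s := by
      rw [← rpow_one_add' hx (by linarith)]
      congr 1
      ring

lemma lowerGamma_eq_add_lowerGamma_add_one (hs : 1 ≤ s) (x : ℝ) :
    lowerGamma s x = (exp (-x) * x ^ s + lowerGamma (s + 1) x) / s := by
  have hs0 : s ≠ 0 := by positivity
  have hderiv : ∀ t : ℝ, HasDerivAt (fun t : ℝ => -(exp (-t) * t ^ s))
      (exp (-t) * t ^ s - s * (exp (-t) * t ^ (s - 1))) t := fun t => by
    have hpow := hasDerivAt_rpow_const (x := t) (Or.inr hs)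
    have hexp := (hasDerivAt_exp (-t)).comp t (hasDerivAt_neg t)
    exact (hexp.mul hpow).neg.congr_deriv (by simp only [Function.comp_apply]; ring)
  have hint := intervalIntegral.integral_eq_sub_of_hasDerivAt (fun t _ => hderiv t)
    (((continuous_exp_neg_mul_rpow (by linarith)).sub
      ((continuous_exp_neg_mul_rpow (by linarith)).const_mul s)).intervalIntegrable 0 x)
  rw [intervalIntegral.integral_sub
      ((continuous_exp_neg_mul_rpow (by linarith)).intervalIntegrable 0 x)
      (((continuous_exp_neg_mul_rpow (by linarith)).const_mul s).intervalIntegrable 0 x),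
    intervalIntegral.integral_const_mul, zero_rpow hs0] at hint
  have hsucc : lowerGamma (s + 1) x = ∫ t in (0 : ℝ)..x, exp (-t) * t ^ s := by
    simp [lowerGamma]
  rw [eq_div_iff hs0, hsucc, lowerGamma]
  linarith

lemma lowerGamma_eq_sum_add (hs : 1 ≤ s) (x : ℝ) (N : ℕ) :
    lowerGamma s x = ∑ n ∈ range N, exp (-x) * (x ^ (s + n) / ∏ k ∈ range (n + 1), (s + k))
      + lowerGamma (s + N) x / ∏ k ∈ range N, (s + k) := by
  induction N with
  | zero => simp
  | succ N ih =>
    have hsN : 1 ≤ s + N := le_add_of_le_of_nonneg hs N.cast_nonneg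
    have hprod : ∏ k ∈ range N, (s + k) ≠ 0 := prod_ne_zero_iff.2 fun k _ => by positivity
    rw [ih, lowerGamma_eq_add_lowerGamma_add_one hsN, sum_range_succ, prod_range_succ,
      Nat.cast_succ, ← add_assoc]
    field_simp
    ring

lemma factorial_le_prod_range_add (hs : 1 ≤ s) (n : ℕ) :
    (n ! : ℝ) ≤ ∏ k ∈ range n, (s + k) := by
  rw [← prod_range_add_one_eq_factorial, Nat.cast_prod]
  exact prod_le_prod (fun k _ => by positivity) fun k _ => by push_cast; linarith

lemma tendsto_lowerGamma_div_prod (hs : 1 ≤ s) (hx : 0 ≤ x) :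
    Tendsto (fun N : ℕ => lowerGamma (s + N) x / ∏ k ∈ range N, (s + k)) atTop (nhds 0) := by
  have hbound : Tendsto (fun N : ℕ => x ^ s * (x ^ N / N !)) atTop (nhds 0) := by
    simpa using (FloorSemiring.tendsto_pow_div_factorial_atTop x).const_mul (x ^ s)
  have hfac := factorial_le_prod_range_add hs
  refine squeeze_zero
    (fun N => div_nonneg (lowerGamma_nonneg hx) ((Nat.cast_nonneg _).trans (hfac N)))
    (fun N => ?_) hbound
  calc lowerGamma (s + N) x / ∏ k ∈ range N, (s + k)
      ≤ x ^ (s + N) / N ! := by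
        gcongr
        · exact lowerGamma_le_rpow (le_add_of_le_of_nonneg hs N.cast_nonneg) hx
        · exact hfac N
    _ = x ^ s * (x ^ N / N !) := by
        rw [rpow_add' hx (by positivity), rpow_natCast, mul_div_assoc]

lemma hasSum_lowerGamma (hs : 1 ≤ s) (hx : 0 ≤ x) :
    HasSum (fun n : ℕ => exp (-x) * (x ^ (s + n) / ∏ k ∈ range (n + 1), (s + k)))
      (lowerGamma s x) := by
  refine (hasSum_iff_tendsto_nat_of_nonneg (fun n => ?_) _).2 ?_
  · have hprod : 0 < ∏ k ∈ range (n + 1), (s + k) := prod_pos fun k _ => by positivity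
    positivity
  · have hrem := (tendsto_lowerGamma_div_prod hs hx).const_sub (lowerGamma s x)
    rw [sub_zero] at hrem
    refine hrem.congr fun N => ?_
    rw [lowerGamma_eq_sum_add hs x N]
    ring

lemma hypF_add_one_eq (hs : 1 ≤ s) (hx : 0 < x) :
    hypF (s + 1) x = s * exp x * lowerGamma s x / x ^ s := by
  have hc : exp (-x) * x ^ s / s ≠ 0 := by positivity
  have hterm : ∀ n : ℕ, exp (-x) * (x ^ (s + n) / ∏ k ∈ range (n + 1), (s + k))
      = exp (-x) * x ^ s / s * (x ^ n / ∏ k ∈ range n, (s + 1 + k)) := fun n => by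
    have hprod : ∏ k ∈ range (n + 1), (s + k) = s * ∏ k ∈ range n, (s + 1 + k) := by
      rw [prod_range_succ', mul_comm]
      push_cast
      simp only [add_zero, add_comm, add_left_comm]
    rw [hprod, rpow_add hx, rpow_natCast]
    field_simp
  have hsum : HasSum (fun n : ℕ => x ^ n / ∏ k ∈ range n, (s + 1 + k))
      (lowerGamma s x / (exp (-x) * x ^ s / s)) := by
    refine (hasSum_mul_left_iff hc).1 ?_
    rw [mul_div_cancel₀ _ hc]
    simpa only [hterm] using hasSum_lowerGamma hs hx.le
  rw [hypF, hsum.tsum_eq, exp_neg]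
  field_simp

end LowerGamma

section Tail

variable {s x : ℝ}

lemma Gamma_sub_lowerGamma (hs : 0 < s) (hx : 0 ≤ x) :
    Gamma s - lowerGamma s x = ∫ t in Ioi x, exp (-t) * t ^ (s - 1) := by
  have hint := GammaIntegral_convergent hs
  rw [Gamma_eq_integral hs, lowerGamma, intervalIntegral.integral_of_le hx,
    ← Ioc_union_Ioi_eq_Ioi hx, setIntegral_union (Ioc_disjoint_Ioi le_rfl) measurableSet_Ioi
      (hint.mono_set Ioc_subset_Ioi_self) (hint.mono_set (Ioi_subset_Ioi hx))]
  ring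

lemma sq_sub_mul_exp_neg_mul_rpow_eqOn (s : ℝ) :
    EqOn (fun t : ℝ => (t - s) ^ 2 * (exp (-t) * t ^ (s - 1)))
      (fun t => exp (-t) * t ^ (s + 2 - 1) - 2 * s * (exp (-t) * t ^ (s + 1 - 1))
        + s ^ 2 * (exp (-t) * t ^ (s - 1))) (Ioi 0) := fun t (ht : 0 < t) => by
  dsimp only
  rw [show s + 2 - 1 = s - 1 + 1 + 1 by ring, show s + 1 - 1 = s - 1 + 1 by ring,
    rpow_add_one ht.ne', rpow_add_one ht.ne']
  ring

lemma integrableOn_sq_sub_mul_exp_neg_mul_rpow (hs : 0 < s) :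
    IntegrableOn (fun t : ℝ => (t - s) ^ 2 * (exp (-t) * t ^ (s - 1))) (Ioi 0) :=
  (((GammaIntegral_convergent (by linarith)).sub
    ((GammaIntegral_convergent (by linarith)).const_mul (2 * s))).add
    ((GammaIntegral_convergent hs).const_mul (s ^ 2))).congr_fun
    (sq_sub_mul_exp_neg_mul_rpow_eqOn s).symm measurableSet_Ioi

lemma integral_sq_sub_mul_exp_neg_mul_rpow (hs : 0 < s) :
    ∫ t in Ioi 0, (t - s) ^ 2 * (exp (-t) * t ^ (s - 1)) = s * Gamma s := by
  have h0 := GammaIntegral_convergent hs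
  have h1 := GammaIntegral_convergent (by linarith : 0 < s + 1)
  have h2 := GammaIntegral_convergent (by linarith : 0 < s + 2)
  rw [setIntegral_congr_fun measurableSet_Ioi (sq_sub_mul_exp_neg_mul_rpow_eqOn s),
    integral_add ?_ (h0.const_mul _), integral_sub h2 (h1.const_mul _),
    integral_const_mul, integral_const_mul, ← Gamma_eq_integral hs,
    ← Gamma_eq_integral (by linarith), ← Gamma_eq_integral (by linarith),
    show s + 2 = s + 1 + 1 by ring, Gamma_add_one (by linarith), Gamma_add_one hs.ne']
  · ring
  · exact h2.sub (h1.const_mul _)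

lemma integral_Ioi_exp_neg_mul_rpow_le (hs : 0 < s) (hx : s < x) :
    ∫ t in Ioi x, exp (-t) * t ^ (s - 1) ≤ s * Gamma s / (x - s) ^ 2 := by
  have hx0 : 0 < x := hs.trans hx
  have hxs : 0 < x - s := sub_pos.2 hx
  have hmom := integrableOn_sq_sub_mul_exp_neg_mul_rpow hs
  calc ∫ t in Ioi x, exp (-t) * t ^ (s - 1)
      ≤ ∫ t in Ioi x, ((t - s) ^ 2 * (exp (-t) * t ^ (s - 1))) / (x - s) ^ 2 := by
        refine setIntegral_mono_on ((GammaIntegral_convergent hs).mono_set (Ioi_subset_Ioi hx0.le))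
          ((hmom.mono_set (Ioi_subset_Ioi hx0.le)).div_const _) measurableSet_Ioi
          fun t (ht : x < t) => ?_
        have : 0 < t := hx0.trans ht
        rw [le_div_iff₀ (by positivity), mul_comm]
        gcongr
    _ = (∫ t in Ioi x, (t - s) ^ 2 * (exp (-t) * t ^ (s - 1))) / (x - s) ^ 2 :=
        integral_div _ _
    _ ≤ s * Gamma s / (x - s) ^ 2 := by
        rw [← integral_sq_sub_mul_exp_neg_mul_rpow hs]
        gcongr
        filter_upwards [ae_restrict_mem measurableSet_Ioi] with t (ht : 0 < t)
        positivity

lemma abs_lowerGamma_div_Gamma_sub_one_le (hs : 0 < s) (hx : s < x) :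
    |lowerGamma s x / Gamma s - 1| ≤ s / (x - s) ^ 2 := by
  have hG := Gamma_pos_of_pos hs
  have htail := Gamma_sub_lowerGamma hs (hs.trans hx).le
  have htail0 : 0 ≤ ∫ t in Ioi x, exp (-t) * t ^ (s - 1) :=
    setIntegral_nonneg measurableSet_Ioi fun t (ht : x < t) => by
      have : 0 < t := hs.trans (hx.trans ht)
      positivity
  have hsq : 0 < (x - s) ^ 2 := pow_pos (sub_pos.2 hx) 2
  have hbound := integral_Ioi_exp_neg_mul_rpow_le hs hx
  rw [le_div_iff₀ hsq] at hbound
  rw [div_sub_one hG.ne', abs_div, abs_of_pos hG, abs_sub_comm, htail, abs_of_nonneg htail0,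
    div_le_div_iff₀ hG hsq]
  linarith

end Tail

lemma hypF_mul_rpow_div_eq {A x : ℝ} (hA : 2 ≤ A) (hx : 0 < x) :
    hypF A x * x ^ (A - 1) / (exp x * Gamma A) = lowerGamma (A - 1) x / Gamma (A - 1) := by
  have hs : 1 ≤ A - 1 := by linarith
  have hF := hypF_add_one_eq hs hx
  rw [sub_add_cancel] at hF
  have hGamma : Gamma A = (A - 1) * Gamma (A - 1) := by
    rw [← Gamma_add_one (by linarith), sub_add_cancel]
  have hG := Gamma_pos_of_pos (by linarith : 0 < A - 1)
  have hpow := rpow_pos_of_pos hx (A - 1)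
  rw [hF, hGamma]
  field_simp

theorem stmt3 (z : ℝ → ℝ)
    (hz : ∀ᶠ A in atTop, A < z A)
    (hlim : Tendsto (fun A => Real.sqrt A / (z A - A)) atTop (nhds 0)) :
    Tendsto (fun A => hypF A (z A) * (z A) ^ (A - 1) / (Real.exp (z A) * Real.Gamma A))
      atTop (nhds 1) := by
  have hbound : ∀ᶠ A in atTop,
      ‖hypF A (z A) * (z A) ^ (A - 1) / (Real.exp (z A) * Real.Gamma A) - 1‖
        ≤ (Real.sqrt A / (z A - A)) ^ 2 := by
    filter_upwards [hz, eventually_ge_atTop 2] with A hzA hA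
    rw [norm_eq_abs, hypF_mul_rpow_div_eq hA (by linarith), div_pow, sq_sqrt (by linarith)]
    calc _ ≤ (A - 1) / (z A - (A - 1)) ^ 2 :=
          abs_lowerGamma_div_Gamma_sub_one_le (by linarith) (by linarith)
      _ ≤ A / (z A - A) ^ 2 := by
          gcongr <;> linarith
  have hsq : Tendsto (fun A => (Real.sqrt A / (z A - A)) ^ 2) atTop (nhds 0) := by
    simpa using hlim.pow 2
  simpa using (squeeze_zero_norm' hbound hsq).add_const 1
end

section
/- Let F(A,z) = Σ_{n≥0} z^n / (A(A+1)···(A+n-1)). For fixed h > 0, if z = A − h√A and A → ∞, then F(A,z) / √(2πA) → e^{h²/2} Φ(−h), where Φ is the standard normal CDF. -/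
open Filter Finset Real

/-- The standard normal cumulative distribution function. -/
noncomputable def stdNormalCDF (h : ℝ) : ℝ :=
  (1 / Real.sqrt (2 * Real.pi)) * ∫ y in Set.Iic h, Real.exp (-y ^ 2 / 2)

/-!
Write `z = A - h√A` and `a_n = ∏_{k<n} z / (A + k)`, so that `F(A, z) = ∑ a_n`. Comparing
`log (1 - h/√A)` and `log (1 + k/A)` with their first-order terms gives
`log a_n = -h n/√A - n(n-1)/(2A) + O(n h²/A + n³/A²)`, hence the step function
`x ↦ a_{⌊√A x⌋}` tends pointwise to `exp (-(h x + x²/2))`. From `1 - t ≤ exp (-t)` it is dominated,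
uniformly in large `A`, by `exp (2 - x/2)`. Its integral over `(0, ∞)` is `F(A, z)/√A`, so
dominated convergence gives `F(A, z)/√A → ∫₀^∞ exp (-(h x + x²/2)) dx = e^{h²/2} √(2π) Φ(-h)`.
-/

open MeasureTheory Set Topology Function

theorem measurable_natFloor_mul {α : Type*} [MeasurableSpace α] (f : ℕ → α) (c : ℝ) :
    Measurable fun x : ℝ => f ⌊c * x⌋₊ :=
  measurable_from_top.comp (Nat.measurable_floor.comp (measurable_const_mul c))

section Integrals

variable {E : Type*} [NormedAddCommGroup E] [NormedSpace ℝ E]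

theorem integral_Ioi_natFloor [CompleteSpace E] {f : ℕ → E}
    (hf : IntegrableOn (fun x : ℝ => f ⌊x⌋₊) (Ioi 0)) :
    ∫ x in Ioi (0 : ℝ), f ⌊x⌋₊ = ∑' n, f n := by
  have hmem : ∀ (n : ℕ) (x : ℝ), x ∈ Ico (n : ℝ) (n + 1) ↔ 0 ≤ x ∧ ⌊x⌋₊ = n := fun n x =>
    have hx0 : x ∈ Ico (n : ℝ) (n + 1) → 0 ≤ x := fun hx => (Nat.cast_nonneg n).trans hx.1
    ⟨fun hx => ⟨hx0 hx, (Nat.floor_eq_iff (hx0 hx)).2 hx⟩,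
      fun ⟨h0, hn⟩ => (Nat.floor_eq_iff h0).1 hn⟩
  have hU : ⋃ n : ℕ, Ico (n : ℝ) (n + 1) = Set.Ici 0 := by
    ext x; simp [hmem]
  have hd : Pairwise (Disjoint on fun n : ℕ => Ico (n : ℝ) (n + 1)) := fun m n hmn =>
    Set.disjoint_left.2 fun x hm hn => hmn (((hmem m x).1 hm).2.symm.trans ((hmem n x).1 hn).2)
  rw [← integral_Ici_eq_integral_Ioi, ← hU, integral_iUnion (fun _ => measurableSet_Ico) hd
    (by rwa [hU, integrableOn_Ici_iff_integrableOn_Ioi])]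
  congr 1; ext n
  rw [setIntegral_congr_fun measurableSet_Ico (fun x hx => congrArg f ((hmem n x).1 hx).2),
    setIntegral_const]
  simp

theorem integral_Ioi_natFloor_mul [CompleteSpace E] {f : ℕ → E} {c : ℝ} (hc : 0 < c)
    (hf : IntegrableOn (fun x : ℝ => f ⌊c * x⌋₊) (Ioi 0)) :
    ∫ x in Ioi (0 : ℝ), f ⌊c * x⌋₊ = c⁻¹ • ∑' n, f n := by
  rw [integrableOn_Ioi_comp_mul_left_iff (fun x => f ⌊x⌋₊) 0 hc, mul_zero] at hf
  rw [integral_comp_mul_left_Ioi (fun x => f ⌊x⌋₊) 0 hc, mul_zero, integral_Ioi_natFloor hf]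

theorem integral_Ioi_comp_add_right (f : ℝ → E) (a b : ℝ) :
    ∫ x in Ioi a, f (x + b) = ∫ x in Ioi (a + b), f x := by
  have e : MeasurableEmbedding fun x : ℝ => x + b :=
    (Homeomorph.addRight b).isClosedEmbedding.measurableEmbedding
  have := e.setIntegral_map (μ := volume) f (Ioi (a + b))
  rw [map_add_right_eq_self, preimage_add_const_Ioi, add_sub_cancel_right] at this
  exact this.symm

end Integrals

theorem integral_Ioi_exp_neg_mul_add_sq (h : ℝ) :
    ∫ x in Ioi 0, exp (-(h * x + x ^ 2 / 2)) =
      exp (h ^ 2 / 2) * ∫ y in Iic (-h), exp (-y ^ 2 / 2) := by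
  have e : ∀ x : ℝ,
      exp (-(h * x + x ^ 2 / 2)) = exp (h ^ 2 / 2) * exp (-(-(x + h)) ^ 2 / 2) := by
    intro x; rw [← Real.exp_add]; ring_nf
  simp_rw [e]
  rw [integral_const_mul, integral_Ioi_comp_add_right (fun y => exp (-(-y) ^ 2 / 2)), zero_add,
    integral_comp_neg_Ioi h (fun y => exp (-y ^ 2 / 2))]

theorem sum_range_natCast (n : ℕ) : ∑ i ∈ range n, (i : ℝ) = n * (n - 1) / 2 := by
  induction n with
  | zero => simp
  | succ n ih => rw [sum_range_succ, ih]; push_cast; ring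

theorem abs_log_one_add_sub_self_le {t : ℝ} (ht : -1 / 2 ≤ t) : |log (1 + t) - t| ≤ 2 * t ^ 2 := by
  have h1 : 0 < 1 + t := by linarith
  have hub : log (1 + t) ≤ t := by linarith [log_le_sub_one_of_pos h1]
  have hlb : t / (1 + t) ≤ log (1 + t) := by
    have := one_sub_inv_le_log_of_pos h1
    rwa [show 1 - (1 + t)⁻¹ = t / (1 + t) by field_simp; ring] at this
  have : t - t / (1 + t) ≤ 2 * t ^ 2 := by
    rw [show t - t / (1 + t) = t ^ 2 / (1 + t) by field_simp; ring, div_le_iff₀ h1]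
    nlinarith [sq_nonneg t]
  rw [abs_of_nonpos (by linarith)]
  linarith

noncomputable def hypFTerm (A z : ℝ) (n : ℕ) : ℝ :=
  ∏ k ∈ range n, z / (A + k)

theorem hypF_eq_tsum_hypFTerm (A z : ℝ) : hypF A z = ∑' n, hypFTerm A z n := by
  simp [hypF, hypFTerm, prod_div_distrib]

section hypFTerm

variable {A z : ℝ}

theorem hypFTerm_pos (hA : 0 < A) (hz : 0 < z) (n : ℕ) : 0 < hypFTerm A z n :=
  prod_pos fun k _ => by positivity

theorem hypFTerm_nonneg (hA : 0 ≤ A) (hz : 0 ≤ z) (n : ℕ) : 0 ≤ hypFTerm A z n :=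
  prod_nonneg fun k _ => by positivity

theorem hypFTerm_le_exp (hA : 0 < A) (hz : 0 ≤ z) (hzA : z ≤ A) (n : ℕ) :
    hypFTerm A z n ≤ exp (-(n * (n - 1) / 2) / (A + n)) := by
  have hfactor : ∀ k ∈ range n, z / (A + k) ≤ exp (-(k / (A + n))) := by
    intro k hk
    have hkn : (k : ℝ) ≤ n := by exact_mod_cast (mem_range.1 hk).le
    calc z / (A + k) ≤ A / (A + k) := by gcongr
      _ = 1 + -(k / (A + k)) := by field_simp; ring
      _ ≤ exp (-(k / (A + k))) := add_one_le_exp _ |>.trans_eq' (add_comm _ _)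
      _ ≤ exp (-(k / (A + n))) := by gcongr
  calc hypFTerm A z n ≤ ∏ k ∈ range n, exp (-(k / (A + n))) :=
        prod_le_prod (fun k _ => by positivity) hfactor
    _ = exp (-(n * (n - 1) / 2) / (A + n)) := by
      rw [← exp_sum, sum_neg_distrib, ← sum_div, sum_range_natCast, neg_div]

theorem hypFTerm_natFloor_le_exp (hA : 1 ≤ A) (hz : 0 ≤ z) (hzA : z ≤ A) {x : ℝ} (hx : 0 ≤ x) :
    hypFTerm A z ⌊√A * x⌋₊ ≤ exp (2 - x / 2) := by
  set n := ⌊√A * x⌋₊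
  have hs : 1 ≤ √A := one_le_sqrt.2 hA
  have hsA : √A ^ 2 = A := sq_sqrt (by linarith)
  have hn : (n : ℝ) ≤ √A * x := Nat.floor_le (by positivity)
  have hn' : √A * x - 1 < n := Nat.sub_one_lt_floor _
  have hexponent : x / 2 - 2 ≤ n * (n - 1) / 2 / (A + n) := by
    -- `n(n-1) - (x-4)(A+n)` is increasing for `n ≥ (x-3)/2` and positive at `n = √A x - 1`.
    have h1 : 0 ≤ (n - (√A * x - 1)) * (n + (√A * x - 1) - x + 3) :=
      mul_nonneg (by linarith) (by nlinarith)
    have h2 : 0 ≤ √A * (√A - 1) * (x ^ 2 - x + 4) :=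
      mul_nonneg (by nlinarith) (by nlinarith [sq_nonneg (x - 1 / 2)])
    rw [le_div_iff₀ (by positivity)]
    nlinarith
  refine (hypFTerm_le_exp (by linarith) hz hzA n).trans (exp_le_exp.2 ?_)
  rw [neg_div]
  linarith

theorem abs_log_hypFTerm_add_le {u : ℝ} (hA : 0 < A) (hu : u ≤ 1 / 2) (n : ℕ) :
    |log (hypFTerm A (A * (1 - u)) n) + n * u + n * (n - 1) / (2 * A)| ≤
      2 * n * u ^ 2 + 2 * n ^ 3 / A ^ 2 := by
  have hu' : 0 < 1 - u := by linarith
  have hlog : ∀ k ∈ range n, log (A * (1 - u) / (A + k)) = log (1 + -u) - log (1 + k / A) := by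
    intro k _
    rw [← log_div (by linarith) (by positivity)]
    congr 1
    field_simp
    ring
  have hsum : log (hypFTerm A (A * (1 - u)) n) + n * u + n * (n - 1) / (2 * A) =
      ∑ k ∈ range n, ((log (1 + -u) - -u) - (log (1 + k / A) - k / A)) := by
    have hsplit : ∀ k : ℕ, (log (1 + -u) - -u) - (log (1 + k / A) - k / A) =
        (log (1 + -u) - log (1 + k / A)) + (u + k / A) := fun k => by ring
    rw [hypFTerm, log_prod (fun k _ => by positivity), sum_congr rfl hlog,
      sum_congr rfl fun k _ => hsplit k, sum_add_distrib, sum_add_distrib, sum_const, card_range,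
      nsmul_eq_mul, ← sum_div, sum_range_natCast]
    ring
  have hterm : ∀ k ∈ range n,
      |(log (1 + -u) - -u) - (log (1 + k / A) - k / A)| ≤ 2 * u ^ 2 + 2 * (n / A) ^ 2 := by
    intro k hk
    have hkn : (k : ℝ) / A ≤ n / A := by gcongr; exact_mod_cast (mem_range.1 hk).le
    have hk0 : 0 ≤ (k : ℝ) / A := by positivity
    refine (abs_sub _ _).trans (add_le_add ?_ ?_)
    · simpa using abs_log_one_add_sub_self_le (t := -u) (by linarith)
    · exact (abs_log_one_add_sub_self_le (by linarith)).trans (by gcongr)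
  calc _ ≤ ∑ k ∈ range n, |(log (1 + -u) - -u) - (log (1 + k / A) - k / A)| := by
        rw [hsum]; exact abs_sum_le_sum_abs _ _
    _ ≤ ∑ k ∈ range n, (2 * u ^ 2 + 2 * (n / A) ^ 2) := sum_le_sum hterm
    _ = 2 * n * u ^ 2 + 2 * n ^ 3 / A ^ 2 := by
      rw [sum_const, card_range, nsmul_eq_mul]; field_simp

theorem tendsto_hypFTerm_natFloor (h : ℝ) {x : ℝ} (hx : 0 ≤ x) :
    Tendsto (fun A => hypFTerm A (A - h * √A) ⌊√A * x⌋₊) atTop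
      (𝓝 (exp (-(h * x + x ^ 2 / 2)))) := by
  set ν : ℝ → ℝ := fun A => ⌊√A * x⌋₊ / √A with hν_def
  have hν : Tendsto ν atTop (𝓝 x) := by
    simpa only [hν_def, comp_def, mul_comm x] using
      (tendsto_nat_floor_mul_div_atTop hx).comp tendsto_sqrt_atTop
  have hinv : Tendsto (fun A : ℝ => (√A)⁻¹) atTop (𝓝 0) :=
    tendsto_inv_atTop_zero.comp tendsto_sqrt_atTop
  have hmain : Tendsto (fun A => -(h * ν A + ν A * (ν A - (√A)⁻¹) / 2)) atTop
      (𝓝 (-(h * x + x ^ 2 / 2))) := by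
    simpa [sq] using ((hν.const_mul h).add ((hν.mul (hν.sub hinv)).div_const 2)).neg
  have herr :
      Tendsto (fun A => 2 * h ^ 2 * ν A * (√A)⁻¹ + 2 * ν A ^ 3 * (√A)⁻¹) atTop (𝓝 0) := by
    simpa using ((hν.const_mul (2 * h ^ 2)).mul hinv).add (((hν.pow 3).const_mul 2).mul hinv)
  -- `abs_log_hypFTerm_add_le` with `u = h/√A` and `n = √A ν`
  have hbound : ∀ᶠ A in atTop, dist (-(h * ν A + ν A * (ν A - (√A)⁻¹) / 2))
      (log (hypFTerm A (A - h * √A) ⌊√A * x⌋₊)) ≤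
        2 * h ^ 2 * ν A * (√A)⁻¹ + 2 * ν A ^ 3 * (√A)⁻¹ := by
    filter_upwards [eventually_gt_atTop 0, tendsto_sqrt_atTop.eventually_ge_atTop (2 * h)]
      with A hA hsh
    have hs : 0 < √A := sqrt_pos.2 hA
    have hsA : √A ^ 2 = A := sq_sqrt hA.le
    have hz : A - h * √A = A * (1 - h / √A) := by field_simp; linear_combination (-h) * hsA
    have hu : h / √A ≤ 1 / 2 := by rw [div_le_iff₀ hs]; linarith
    have := abs_log_hypFTerm_add_le hA hu ⌊√A * x⌋₊
    rw [dist_comm, dist_eq_norm, norm_eq_abs, hz]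
    simp only [hν_def]
    generalize √A = s at *
    subst hsA
    convert this using 2
    · field_simp; ring
    · field_simp
    · field_simp
  have hlog :=
    hmain.congr_dist (squeeze_zero' (Eventually.of_forall fun _ => dist_nonneg) hbound herr)
  refine ((continuous_exp.tendsto _).comp hlog).congr' ?_
  filter_upwards [eventually_gt_atTop 0, tendsto_sqrt_atTop.eventually_gt_atTop h] with A hA hsh
  have hz : 0 < A - h * √A := by nlinarith [sq_sqrt hA.le, sqrt_pos.2 hA]
  exact exp_log (hypFTerm_pos hA hz _)

theorem eventually_one_le_and_nonneg_sub_mul_sqrt (h : ℝ) :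
    ∀ᶠ A : ℝ in atTop, 1 ≤ A ∧ 0 ≤ A - h * √A := by
  filter_upwards [eventually_ge_atTop 1, tendsto_sqrt_atTop.eventually_ge_atTop h] with A hA hsh
  refine ⟨hA, ?_⟩
  nlinarith [sq_sqrt (zero_le_one.trans hA), sqrt_nonneg A]

theorem integrableOn_exp_two_sub_half : IntegrableOn (fun x : ℝ => exp (2 - x / 2)) (Ioi 0) := by
  have := (exp_neg_integrableOn_Ioi 0 (b := 1 / 2) (by norm_num)).const_mul (exp 2)
  refine IntegrableOn.congr_fun this (fun x _ => ?_) measurableSet_Ioi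
  rw [← exp_add]; ring_nf

theorem ae_norm_hypFTerm_natFloor_le {A z : ℝ} (hA : 1 ≤ A) (hz : 0 ≤ z) (hzA : z ≤ A) :
    ∀ᵐ x ∂volume.restrict (Ioi 0), ‖hypFTerm A z ⌊√A * x⌋₊‖ ≤ exp (2 - x / 2) := by
  refine (ae_restrict_iff' measurableSet_Ioi).2 (Eventually.of_forall fun x hx => ?_)
  rw [norm_of_nonneg (hypFTerm_nonneg (by linarith) hz _)]
  exact hypFTerm_natFloor_le_exp hA hz hzA (le_of_lt hx)

theorem integral_hypFTerm_natFloor {A z : ℝ} (hA : 1 ≤ A) (hz : 0 ≤ z) (hzA : z ≤ A) :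
    ∫ x in Ioi 0, hypFTerm A z ⌊√A * x⌋₊ = hypF A z / √A := by
  have hint : IntegrableOn (fun x => hypFTerm A z ⌊√A * x⌋₊) (Ioi 0) :=
    integrableOn_exp_two_sub_half.mono' (measurable_natFloor_mul _ _).aestronglyMeasurable
      (ae_norm_hypFTerm_natFloor_le hA hz hzA)
  rw [integral_Ioi_natFloor_mul (sqrt_pos.2 (by linarith)) hint, hypF_eq_tsum_hypFTerm,
    smul_eq_mul, inv_mul_eq_div]

theorem tendsto_integral_hypFTerm_natFloor {h : ℝ} (hh : 0 ≤ h) :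
    Tendsto (fun A => ∫ x in Ioi 0, hypFTerm A (A - h * √A) ⌊√A * x⌋₊) atTop
      (𝓝 (∫ x in Ioi 0, exp (-(h * x + x ^ 2 / 2)))) := by
  refine tendsto_integral_filter_of_dominated_convergence _
    (Eventually.of_forall fun A => (measurable_natFloor_mul _ _).aestronglyMeasurable) ?_
    integrableOn_exp_two_sub_half
    ((ae_restrict_iff' measurableSet_Ioi).2
      (Eventually.of_forall fun x hx => tendsto_hypFTerm_natFloor h (le_of_lt hx)))
  filter_upwards [eventually_one_le_and_nonneg_sub_mul_sqrt h] with A ⟨hA, hz⟩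
  exact ae_norm_hypFTerm_natFloor_le hA hz (sub_le_self _ (by positivity))

theorem stmt5 (h : ℝ) (hh : 0 < h) :
    Tendsto (fun A => hypF A (A - h * Real.sqrt A) / Real.sqrt (2 * Real.pi * A))
      atTop (nhds (Real.exp (h ^ 2 / 2) * stdNormalCDF (-h))) := by
  have hlim := (tendsto_integral_hypFTerm_natFloor hh.le).const_mul (√(2 * π))⁻¹
  have hvalue : exp (h ^ 2 / 2) * stdNormalCDF (-h) =
      (√(2 * π))⁻¹ * ∫ x in Ioi 0, exp (-(h * x + x ^ 2 / 2)) := by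
    rw [stdNormalCDF, integral_Ioi_exp_neg_mul_add_sq]; ring
  rw [hvalue]
  refine hlim.congr' ?_
  filter_upwards [eventually_one_le_and_nonneg_sub_mul_sqrt h] with A ⟨hA, hz⟩
  rw [integral_hypFTerm_natFloor hA hz (sub_le_self _ (by positivity)),
    sqrt_mul (by positivity : (0 : ℝ) ≤ 2 * π) A]
  field_simp
end hypFTerm
end

section
/- For ω > 0 and a positive integer r, Σ_{k=0}^r ln(1 + ωk) = (1/ω + r + 1/2) ln(1 + rω) − r + O(ω), where the error term is bounded by C·ω·(1+rω) for an absolute constant C, uniformly for rω in any fixed compact subset of (0,∞). -/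
open Finset

/-! With `G k = (1/ω + k + 1/2) log (1 + ωk) - k`, each increment `G (k+1) - G k` exceeds
`log (1 + ω(k+1))` by `stirlingDefect (1/ω + k)`, the quantity governing the error in Stirling's
formula. The artanh series of `log (1 + 1/a)` gives `0 ≤ stirlingDefect a ≤ 1 / (12 a (a + 1))`
(Robbins' bound), so telescoping leaves an error between `0` and `r ω² / 12`. -/

/-- For natural `n ≥ 1`, `stirlingDefect n = log (stirlingSeq n) - log (stirlingSeq (n + 1))`. -/
noncomputable def stirlingDefect (a : ℝ) : ℝ := (a + 1 / 2) * Real.log (1 + a⁻¹) - 1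

theorem hasSum_stirlingDefect {a : ℝ} (ha : 0 < a) :
    HasSum (fun k : ℕ => 1 / (2 * ((k + 1 : ℕ) : ℝ) + 1) * ((1 / (2 * a + 1)) ^ 2) ^ (k + 1))
      (stirlingDefect a) := by
  let f (k : ℕ) : ℝ := 1 / (2 * k + 1) * ((1 / (2 * a + 1)) ^ 2) ^ k
  change HasSum (fun k => f (k + 1)) _
  rw [hasSum_nat_add_iff]
  convert! (Real.hasSum_log_one_add_inv ha).mul_left (a + 1 / 2) using 1
  · ext k
    simp only [f, pow_succ]
    field
  · simp [f, stirlingDefect]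

theorem stirlingDefect_nonneg {a : ℝ} (ha : 0 < a) : 0 ≤ stirlingDefect a :=
  (hasSum_stirlingDefect ha).nonneg fun _ => by positivity

theorem stirlingDefect_le {a : ℝ} (ha : 0 < a) : stirlingDefect a ≤ 1 / (12 * a * (a + 1)) := by
  set q := (1 / (2 * a + 1)) ^ 2 with hq
  have hq1 : q < 1 := by
    rw [hq, div_pow, one_pow, div_lt_one (by positivity)]
    nlinarith
  suffices HasSum (fun k : ℕ => q ^ (k + 1) / 3) (1 / (12 * a * (a + 1))) by
    refine hasSum_le (fun k => ?_) (hasSum_stirlingDefect ha) this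
    rw [div_eq_inv_mul _ 3, one_div]
    gcongr
    push_cast
    linarith [k.cast_nonneg (α := ℝ)]
  have hgeom := ((hasSum_geometric_of_lt_one (by positivity) hq1).mul_right q).div_const 3
  convert! hgeom using 1
  rw [hq, div_pow, one_pow, one_sub_div (by positivity), inv_div,
    show (2 * a + 1) ^ 2 - 1 = 4 * a * (a + 1) by ring]
  field

theorem stirlingDefect_inv_add_le {ω x : ℝ} (hω : 0 < ω) (hx : 0 ≤ x) :
    stirlingDefect (1 / ω + x) ≤ ω ^ 2 / 12 := by
  have ha : 0 < 1 / ω + x := by positivity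
  calc stirlingDefect (1 / ω + x) ≤ 1 / (12 * (1 / ω + x) * (1 / ω + x + 1)) :=
        stirlingDefect_le ha
    _ ≤ 1 / (12 * (1 / ω) * (1 / ω)) := by gcongr <;> linarith
    _ = ω ^ 2 / 12 := by field

theorem log_one_add_mul_succ {ω x : ℝ} (hω : 0 < ω) (hx : 0 ≤ x) :
    Real.log (1 + ω * (x + 1)) = Real.log (1 + ω * x) + Real.log (1 + (1 / ω + x)⁻¹) := by
  rw [← Real.log_mul (by positivity) (by positivity)]
  congr 1
  field

theorem sum_range_succ_log_one_add_mul {ω : ℝ} (hω : 0 < ω) (r : ℕ) :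
    ∑ k ∈ range (r + 1), Real.log (1 + ω * k) =
      (1 / ω + r + 1 / 2) * Real.log (1 + r * ω) - r -
        ∑ k ∈ range r, stirlingDefect (1 / ω + k) := by
  induction r with
  | zero => simp
  | succ r ih =>
    rw [sum_range_succ, ih, sum_range_succ, stirlingDefect]
    push_cast
    rw [mul_comm _ ω, mul_comm _ ω, log_one_add_mul_succ hω r.cast_nonneg]
    ring

theorem stmt12_general (a c : ℝ) :
    ∃ C > 0, ∀ (ω : ℝ) (r : ℕ), 0 < ω → 0 < r → a ≤ r * ω → r * ω ≤ c →
      |(∑ k ∈ Finset.range (r + 1), Real.log (1 + ω * k)) -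
        ((1 / ω + r + 1 / 2) * Real.log (1 + r * ω) - r)| ≤ C * ω * (1 + r * ω) := by
  refine ⟨1 / 12, by norm_num, fun ω r hω _ _ _ => ?_⟩
  have hdefect_nonneg : 0 ≤ ∑ k ∈ range r, stirlingDefect (1 / ω + k) :=
    sum_nonneg fun k _ => stirlingDefect_nonneg (by positivity)
  rw [sum_range_succ_log_one_add_mul hω, sub_sub_cancel_left, abs_neg,
    abs_of_nonneg hdefect_nonneg]
  calc ∑ k ∈ range r, stirlingDefect (1 / ω + k)
      ≤ ∑ k ∈ range r, ω ^ 2 / 12 :=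
        sum_le_sum fun k _ => stirlingDefect_inv_add_le hω k.cast_nonneg
    _ = 1 / 12 * ω * (r * ω) := by rw [sum_const, card_range, nsmul_eq_mul]; ring
    _ ≤ 1 / 12 * ω * (1 + r * ω) := by gcongr; linarith

theorem stmt12 (a c : ℝ) (ha : 0 < a) (hac : a ≤ c) :
    ∃ C > 0, ∀ (ω : ℝ) (r : ℕ), 0 < ω → 0 < r → a ≤ r * ω → r * ω ≤ c →
      |(∑ k ∈ Finset.range (r + 1), Real.log (1 + ω * k)) -
        ((1 / ω + r + 1 / 2) * Real.log (1 + r * ω) - r)| ≤ C * ω * (1 + r * ω) :=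
  stmt12_general a c
end
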